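/- For a planar convex body D of constant width and a point v outside D, pdist(v, D) > diam(D). -/

import Mathlib

open MeasureTheory Real Set

noncomputable section

abbrev E2 := EuclideanSpace ℝ (Fin 2)

def uvec (θ : ℝ) : E2 := WithLp.toLp 2 ![Real.cos θ, Real.sin θ]
def rotvec (θ : ℝ) : E2 := WithLp.toLp 2 ![Real.sin θ, -Real.cos θ]

def IsConvexBody (C : Set E2) : Prop :=
  IsCompact C ∧ Convex ℝ C ∧ (interior C).Nonempty

/-- `n θ` is the touching point of the supporting line of `C` with inward normal `uvec θ`. -/
def IsNormalSel (C : Set E2) (n : ℝ → E2) : Prop :=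
  ∀ θ, n θ ∈ C ∧ ∀ y ∈ C, (inner ℝ (n θ) (uvec θ) : ℝ) ≤ inner ℝ y (uvec θ)

/-- pseudodistance computed from normal selections of the two bodies. -/
def pdistN (n₁ n₂ : ℝ → E2) : ℝ :=
  (1/2) * ∫ θ in (0:ℝ)..(2*π), |(inner ℝ (n₁ θ - n₂ θ) (rotvec θ) : ℝ)|

/-- distance from a point to the normal line of a body with normal selection `n`. -/
def pdistP (v : E2) (n : ℝ → E2) : ℝ :=
  (1/2) * ∫ θ in (0:ℝ)..(2*π), |(inner ℝ (v - n θ) (rotvec θ) : ℝ)|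

def hsup (C : Set E2) (θ : ℝ) : ℝ := sSup ((fun x => (inner ℝ x (rotvec θ) : ℝ)) '' C)
def hinf (C : Set E2) (θ : ℝ) : ℝ := sInf ((fun x => (inner ℝ x (rotvec θ) : ℝ)) '' C)

def pperN (C : Set E2) (n : ℝ → E2) : ℝ :=
  (1/2) * ∫ θ in (0:ℝ)..(2*π),
    (|hsup C θ - (inner ℝ (n θ) (rotvec θ) : ℝ)| + |hinf C θ - (inner ℝ (n θ) (rotvec θ) : ℝ)|)

def ConstantWidth (D : Set E2) (w : ℝ) : Prop :=
  ∀ d : E2, ‖d‖ = 1 →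
    sSup ((fun x => (inner ℝ x d : ℝ)) '' D) - sInf ((fun x => (inner ℝ x d : ℝ)) '' D) = w

end

/-!
Separate `v` from `D` strictly (Hahn–Banach) by a direction `uvec θ₀`, and put
`δ = ⟪n θ₀ - v, uvec θ₀⟫ > 0`. Constant width makes the chord from `n θ` to `n (θ + π)` a diameter
parallel to `uvec θ`, so `n (θ + π) = n θ + w • uvec θ`; in particular the minimizer `n θ` is
unique, hence continuous in `θ`. By the envelope theorem, `θ ↦ ⟪n θ - v, uvec θ⟫` is then an
antiderivative of `⟪v - n θ, rotvec θ⟫`, whose integral over `[θ₀, θ₀ + π]` is therefore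
`-(w + 2δ)`. As `|⟪v - n θ, rotvec θ⟫|` is `π`-periodic, the pseudodistance is at least
`w + 2δ > w = diam D`.
-/

noncomputable section

open RealInnerProductSpace Filter Topology Asymptotics

section InnerProductSpace

variable {F : Type*} [NormedAddCommGroup F] [InnerProductSpace ℝ F]

theorem eq_inner_smul_of_norm_le_inner {z u : F} (hu : ‖u‖ = 1) (h : ‖z‖ ≤ ⟪z, u⟫) :
    z = ⟪z, u⟫ • u := by
  have heq : ⟪z, u⟫ = ‖z‖ * ‖u‖ := le_antisymm (real_inner_le_norm z u) (by rwa [hu, mul_one])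
  have hpar := inner_eq_norm_mul_iff_real.1 heq
  rw [hu, one_smul] at hpar
  rw [heq, hu, mul_one]
  exact hpar

/-- Envelope theorem: the motion of the minimizer `n φ` does not contribute to the derivative. -/
theorem hasDerivAt_inner_of_forall_inner_le {n u : ℝ → F} {u' : F} {θ : ℝ}
    (hu : HasDerivAt u u' θ) (hn : ContinuousAt n θ)
    (hmin : ∀ φ ψ, ⟪n φ, u φ⟫ ≤ ⟪n ψ, u φ⟫) :
    HasDerivAt (fun φ => ⟪n φ, u φ⟫) ⟪n θ, u'⟫ θ := by
  have hbound : ∀ φ, ‖⟪n φ, u φ⟫ - ⟪n θ, u φ⟫‖ ≤ ‖n φ - n θ‖ * ‖u φ - u θ‖ := by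
    intro φ
    have h₁ := hmin φ θ
    have h₂ := hmin θ φ
    have h₃ := abs_le.1 (abs_real_inner_le_norm (n φ - n θ) (u φ - u θ))
    simp only [inner_sub_left, inner_sub_right] at h₃
    rw [Real.norm_eq_abs, abs_le]
    constructor <;> linarith
  have hsmall : (fun φ => ‖n φ - n θ‖ * ‖u φ - u θ‖) =o[𝓝 θ] fun φ => φ - θ := by
    have h₁ : (fun φ => n φ - n θ) =o[𝓝 θ] fun _ => (1 : ℝ) :=
      (isLittleO_one_iff ℝ).2 (tendsto_sub_nhds_zero_iff.2 hn)
    simpa using h₁.norm_left.mul_isBigO hu.isBigO_sub.norm_left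
  have hvariation : HasDerivAt (fun φ => ⟪n φ, u φ⟫ - ⟪n θ, u φ⟫) 0 θ := by
    rw [hasDerivAt_iff_isLittleO]
    simpa using
      (isBigO_of_le _ fun φ => (hbound φ).trans (Real.le_norm_self _)).trans_isLittleO hsmall
  refine ((hvariation.add ((hasDerivAt_const θ (n θ)).inner ℝ hu)).congr_deriv
    (by simp)).congr_of_eventuallyEq (.of_forall fun φ => ?_)
  simp

theorem continuous_of_isMinOn_unique {X E : Type*} [TopologicalSpace X] [TopologicalSpace E]
    {K : Set E} (hK : IsCompact K) {f : X → E → ℝ} (hf : Continuous (Function.uncurry f))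
    {n : X → E} (hnK : ∀ θ, n θ ∈ K) (hmin : ∀ θ, IsMinOn (f θ) K (n θ))
    (huniq : ∀ θ, ∀ x ∈ K, IsMinOn (f θ) K x → x = n θ) : Continuous n := by
  refine continuous_iff_continuousAt.2 fun θ => hK.tendsto_nhds_of_unique_mapClusterPt
    (.of_forall hnK) fun x hxK hx => huniq θ x hxK fun y hy => ?_
  by_contra hlt
  have hnear : ∀ᶠ p in 𝓝 θ ×ˢ 𝓝 x, f p.1 y < f p.1 p.2 := by
    rw [← nhds_prod_eq]
    exact ((hf.comp (continuous_fst.prodMk continuous_const)).continuousAt.eventually_lt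
      hf.continuousAt (not_le.1 hlt))
  obtain ⟨pa, ha, pb, hb, hab⟩ := eventually_prod_iff.1 hnear
  obtain ⟨φ, hφa, hφb⟩ := ((hx.frequently hb).and_eventually ha).exists
  exact (hab hφb hφa).not_ge (hmin φ hy)

end InnerProductSpace

section UnitVectors

@[simp] lemma uvec_apply_zero (θ : ℝ) : uvec θ 0 = Real.cos θ := rfl
@[simp] lemma uvec_apply_one (θ : ℝ) : uvec θ 1 = Real.sin θ := rfl
@[simp] lemma rotvec_apply_zero (θ : ℝ) : rotvec θ 0 = Real.sin θ := rfl
@[simp] lemma rotvec_apply_one (θ : ℝ) : rotvec θ 1 = -Real.cos θ := rfl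

lemma uvec_add_pi (θ : ℝ) : uvec (θ + π) = -uvec θ := by
  ext i; fin_cases i <;> simp [uvec, Real.cos_add_pi, Real.sin_add_pi]

lemma rotvec_add_pi (θ : ℝ) : rotvec (θ + π) = -rotvec θ := by
  ext i; fin_cases i <;> simp [rotvec, Real.cos_add_pi, Real.sin_add_pi]

lemma norm_uvec (θ : ℝ) : ‖uvec θ‖ = 1 := by
  simp [EuclideanSpace.norm_eq, Fin.sum_univ_two]

lemma inner_uvec_rotvec (θ : ℝ) : ⟪uvec θ, rotvec θ⟫ = 0 := by
  simp [PiLp.inner_apply, Fin.sum_univ_two]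
  ring

lemma hasDerivAt_uvec (θ : ℝ) : HasDerivAt uvec (-rotvec θ) θ := by
  have huvec : uvec = fun φ => Real.cos φ • EuclideanSpace.single (0 : Fin 2) (1 : ℝ) +
      Real.sin φ • EuclideanSpace.single 1 1 := by
    ext φ i; fin_cases i <;> simp
  rw [huvec]
  refine (((Real.hasDerivAt_cos θ).smul_const _).add
    ((Real.hasDerivAt_sin θ).smul_const _)).congr_deriv ?_
  ext i; fin_cases i <;> simp

lemma continuous_uvec : Continuous uvec :=
  continuous_iff_continuousAt.2 fun θ => (hasDerivAt_uvec θ).continuousAt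

lemma continuous_rotvec : Continuous rotvec := by
  have h : rotvec = fun θ => -uvec (θ + π / 2) := by
    ext θ i; fin_cases i <;> simp [uvec, rotvec, Real.cos_add_pi_div_two, Real.sin_add_pi_div_two]
  rw [h]
  exact (continuous_uvec.comp (continuous_add_const _)).neg

lemma exists_eq_smul_uvec (a : E2) : ∃ (r : ℝ) (θ : ℝ), 0 ≤ r ∧ a = r • uvec θ := by
  set z : ℂ := ⟨a 0, a 1⟩
  refine ⟨‖z‖, z.arg, norm_nonneg _, ?_⟩
  ext i; fin_cases i
  · simp [uvec, Complex.norm_mul_cos_arg, z]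
  · simp [uvec, Complex.norm_mul_sin_arg, z]

end UnitVectors

lemma exists_uvec_inner_lt {D : Set E2} (hconv : Convex ℝ D) (hclosed : IsClosed D) {v : E2}
    (hv : v ∉ D) : ∃ θ, ∀ y ∈ D, ⟪v, uvec θ⟫ < ⟪y, uvec θ⟫ := by
  obtain ⟨f, s, hfv, hfD⟩ := geometric_hahn_banach_point_closed hconv hclosed hv
  obtain ⟨r, θ, hr, hf⟩ := exists_eq_smul_uvec ((InnerProductSpace.toDual ℝ E2).symm f)
  have hrepr : ∀ x, r * ⟪x, uvec θ⟫ = f x := fun x => by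
    rw [← InnerProductSpace.toDual_symm_apply, hf, real_inner_smul_left, real_inner_comm]
  refine ⟨θ, fun y hy => lt_of_mul_lt_mul_left ?_ hr⟩
  rw [hrepr, hrepr]
  exact hfv.trans (hfD y hy)

variable {D : Set E2} {n : ℝ → E2} {w : ℝ}

namespace IsNormalSel

lemma inner_le (hn : IsNormalSel D n) (φ ψ : ℝ) : ⟪n φ, uvec φ⟫ ≤ ⟪n ψ, uvec φ⟫ :=
  (hn φ).2 _ (hn ψ).1

lemma inner_le_inner_add_pi (hn : IsNormalSel D n) (θ : ℝ) {y : E2} (hy : y ∈ D) :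
    ⟪y, uvec θ⟫ ≤ ⟪n (θ + π), uvec θ⟫ := by
  have h := (hn (θ + π)).2 y hy
  rwa [uvec_add_pi, inner_neg_right, inner_neg_right, neg_le_neg_iff] at h

lemma hasDerivAt_inner_sub (hn : IsNormalSel D n) {θ : ℝ} (hcont : ContinuousAt n θ) (v : E2) :
    HasDerivAt (fun φ => ⟪n φ - v, uvec φ⟫) ⟪v - n θ, rotvec θ⟫ θ := by
  have h := (hasDerivAt_inner_of_forall_inner_le (hasDerivAt_uvec θ) hcont hn.inner_le).sub
    ((hasDerivAt_const θ v).inner ℝ (hasDerivAt_uvec θ))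
  refine (h.congr_deriv ?_).congr_of_eventuallyEq (.of_forall fun φ => ?_)
  · simp only [inner_neg_right, inner_zero_left, add_zero, inner_sub_left]
    ring
  · simp only [inner_sub_left, Pi.sub_apply]

end IsNormalSel

namespace ConstantWidth

lemma inner_sub_eq (hw : ConstantWidth D w) (hn : IsNormalSel D n) {θ : ℝ} {x : E2} (hx : x ∈ D)
    (hxmin : ∀ y ∈ D, ⟪x, uvec θ⟫ ≤ ⟪y, uvec θ⟫) : ⟪n (θ + π) - x, uvec θ⟫ = w := by
  have hsup : sSup ((⟪·, uvec θ⟫) '' D) = ⟪n (θ + π), uvec θ⟫ :=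
    IsGreatest.csSup_eq ⟨mem_image_of_mem _ (hn _).1,
      forall_mem_image.2 fun _ hy => hn.inner_le_inner_add_pi θ hy⟩
  have hinf : sInf ((⟪·, uvec θ⟫) '' D) = ⟪x, uvec θ⟫ :=
    IsLeast.csInf_eq ⟨mem_image_of_mem _ hx, forall_mem_image.2 hxmin⟩
  rw [inner_sub_left, ← hsup, ← hinf]
  exact hw _ (norm_uvec θ)

lemma diam_eq (hw : ConstantWidth D w) (hD : IsCompact D) (hn : IsNormalSel D n) :
    Metric.diam D = w := by
  have hwidth := hw.inner_sub_eq hn (hn 0).1 (hn 0).2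
  have hw0 : 0 ≤ w := by
    rw [← hwidth, inner_sub_left]
    linarith [hn.inner_le_inner_add_pi 0 (hn 0).1]
  refine le_antisymm (Metric.diam_le_of_forall_dist_le hw0 fun p hp q hq => ?_) ?_
  · obtain ⟨r, θ, hr, hpq⟩ := exists_eq_smul_uvec (p - q)
    have hdist : dist p q = ⟪p - q, uvec θ⟫ := by
      rw [dist_eq_norm, hpq, norm_smul, real_inner_smul_left, real_inner_self_eq_norm_sq,
        norm_uvec, Real.norm_of_nonneg hr]
      ring
    rw [hdist, ← hw.inner_sub_eq hn (hn θ).1 (hn θ).2, inner_sub_left, inner_sub_left]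
    linarith [hn.inner_le_inner_add_pi θ hp, (hn θ).2 q hq]
  · calc w = ⟪n (0 + π) - n 0, uvec 0⟫ := hwidth.symm
      _ ≤ ‖n (0 + π) - n 0‖ := by simpa [norm_uvec] using real_inner_le_norm _ (uvec 0)
      _ ≤ Metric.diam D := by
        rw [← dist_eq_norm]
        exact Metric.dist_le_diam_of_mem hD.isBounded (hn _).1 (hn 0).1

lemma sub_eq_smul_uvec (hw : ConstantWidth D w) (hD : IsCompact D) (hn : IsNormalSel D n)
    {θ : ℝ} {x : E2} (hx : x ∈ D) (hxmin : ∀ y ∈ D, ⟪x, uvec θ⟫ ≤ ⟪y, uvec θ⟫) :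
    n (θ + π) - x = w • uvec θ := by
  have hinner := hw.inner_sub_eq hn hx hxmin
  have hnorm : ‖n (θ + π) - x‖ ≤ ⟪n (θ + π) - x, uvec θ⟫ := by
    rw [hinner, ← hw.diam_eq hD hn, ← dist_eq_norm]
    exact Metric.dist_le_diam_of_mem hD.isBounded (hn _).1 hx
  have h := eq_inner_smul_of_norm_le_inner (norm_uvec θ) hnorm
  rwa [hinner] at h

lemma normalSel_add_pi (hw : ConstantWidth D w) (hD : IsCompact D) (hn : IsNormalSel D n)
    (θ : ℝ) : n (θ + π) = n θ + w • uvec θ := by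
  rw [← hw.sub_eq_smul_uvec hD hn (hn θ).1 (hn θ).2, add_sub_cancel]

lemma eq_normalSel (hw : ConstantWidth D w) (hD : IsCompact D) (hn : IsNormalSel D n)
    {θ : ℝ} {x : E2} (hx : x ∈ D) (hxmin : ∀ y ∈ D, ⟪x, uvec θ⟫ ≤ ⟪y, uvec θ⟫) : x = n θ :=
  sub_right_injective ((hw.sub_eq_smul_uvec hD hn hx hxmin).trans
    (hw.sub_eq_smul_uvec hD hn (hn θ).1 (hn θ).2).symm)

lemma continuous_normalSel (hw : ConstantWidth D w) (hD : IsCompact D) (hn : IsNormalSel D n) :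
    Continuous n :=
  continuous_of_isMinOn_unique hD (f := fun θ x => ⟪x, uvec θ⟫)
    (continuous_snd.inner (continuous_uvec.comp continuous_fst)) (fun θ => (hn θ).1)
    (fun θ => isMinOn_iff.2 (hn θ).2)
    (fun _ _ hx hxmin => hw.eq_normalSel hD hn hx (isMinOn_iff.1 hxmin))

lemma integral_inner_rotvec (hw : ConstantWidth D w) (hD : IsCompact D) (hn : IsNormalSel D n)
    (v : E2) (θ₀ : ℝ) :
    ∫ θ in θ₀..θ₀ + π, ⟪v - n θ, rotvec θ⟫ = -(w + 2 * ⟪n θ₀ - v, uvec θ₀⟫) := by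
  have hcont := hw.continuous_normalSel hD hn
  rw [intervalIntegral.integral_eq_sub_of_hasDerivAt
    (fun θ _ => hn.hasDerivAt_inner_sub hcont.continuousAt v)
    (((continuous_const.sub hcont).inner continuous_rotvec).intervalIntegrable _ _),
    hw.normalSel_add_pi hD hn, uvec_add_pi]
  simp only [inner_neg_right, inner_sub_left, inner_add_left, real_inner_smul_left,
    real_inner_self_eq_norm_sq, norm_uvec]
  ring

lemma periodic_abs_inner_rotvec (hw : ConstantWidth D w) (hD : IsCompact D)
    (hn : IsNormalSel D n) (v : E2) :
    Function.Periodic (fun θ => |⟪v - n θ, rotvec θ⟫|) π := fun θ => by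
  simp only [hw.normalSel_add_pi hD hn, rotvec_add_pi, inner_neg_right, sub_add_eq_sub_sub,
    inner_sub_left (v - n θ), real_inner_smul_left, inner_uvec_rotvec, mul_zero, neg_zero,
    sub_zero, abs_neg]

end ConstantWidth

theorem pdist_of_outside_point (D : Set E2) (hD : IsConvexBody D)
    (w : ℝ) (hw : ConstantWidth D w)
    (n : ℝ → E2) (hn : IsNormalSel D n)
    (v : E2) (hv : v ∉ D) :
    Metric.diam D < ∫ θ in (0:ℝ)..π, |(inner ℝ (v - n θ) (rotvec θ) : ℝ)| := by
  obtain ⟨hcomp, hconv, -⟩ := hD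
  obtain ⟨θ₀, hsep⟩ := exists_uvec_inner_lt hconv hcomp.isClosed hv
  have hgap : 0 < ⟪n θ₀ - v, uvec θ₀⟫ := by
    rw [inner_sub_left]
    linarith [hsep _ (hn θ₀).1]
  have hdiam := hw.diam_eq hcomp hn
  have hw0 : 0 ≤ w := hdiam ▸ Metric.diam_nonneg
  calc Metric.diam D = w := hdiam
    _ < |∫ θ in θ₀..θ₀ + π, ⟪v - n θ, rotvec θ⟫| := by
      rw [hw.integral_inner_rotvec hcomp hn, abs_neg, abs_of_pos (by linarith)]
      linarith
    _ ≤ ∫ θ in θ₀..θ₀ + π, |⟪v - n θ, rotvec θ⟫| :=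
      intervalIntegral.abs_integral_le_integral_abs (by linarith [pi_pos])
    _ = ∫ θ in (0:ℝ)..π, |⟪v - n θ, rotvec θ⟫| := by
      simpa using (hw.periodic_abs_inner_rotvec hcomp hn v).intervalIntegral_add_eq θ₀ 0

end
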